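/- arXiv:2209.06715 — 6 statements merged into one kernel-verified Lean document; each statement's English description precedes it below -/
import Mathlib

section
/- Let A : ℝ^N → ℝ^m be a linear map, v ∈ ker A with v ≠ 0, and S a finite subset of (ker A)ᗮ with 0 ∉ S. Set M₁ = S ∪ {0, v}. Then the optimality constant of (A, M₁) equals ‖v‖/2, and the infimum is attained: there exists a reconstruction map φ : ℝ^m → ℝ^N with φ(A s) = s for all s ∈ S and φ(0) = v/2, whose worst-case error on M₁ is exactly ‖v‖/2. -/
open scoped ENNReal

/-! For any reconstruction map `ψ`, the points `0` and `v ∈ ker A` have the same measurement `0`,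
so `ψ 0` must serve both; by the triangle inequality it is at distance at least `‖v‖/2` from one
of them. Conversely, since `A` is injective on `(ker A)ᗮ`, a map can recover every point of `S`
exactly and send `0` to the midpoint `v/2`, which is at distance exactly `‖v‖/2` from both. -/

/-- Worst-case (ℓ²) reconstruction error of `φ` on the set `M₁` for the forward map `A`. -/
noncomputable def worstError {N m : ℕ}
    (A : EuclideanSpace ℝ (Fin N) →ₗ[ℝ] EuclideanSpace ℝ (Fin m))
    (M₁ : Set (EuclideanSpace ℝ (Fin N)))
    (φ : EuclideanSpace ℝ (Fin m) → EuclideanSpace ℝ (Fin N)) : ℝ≥0∞ :=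
  ⨆ x : M₁, (‖φ (A (x : EuclideanSpace ℝ (Fin N))) - (x : EuclideanSpace ℝ (Fin N))‖₊ : ℝ≥0∞)

/-- Optimality constant of the pair `(A, M₁)`: the infimum of the worst-case error
over all reconstruction maps. -/
noncomputable def optConst {N m : ℕ}
    (A : EuclideanSpace ℝ (Fin N) →ₗ[ℝ] EuclideanSpace ℝ (Fin m))
    (M₁ : Set (EuclideanSpace ℝ (Fin N))) : ℝ≥0∞ :=
  ⨅ φ : EuclideanSpace ℝ (Fin m) → EuclideanSpace ℝ (Fin N), worstError A M₁ φ

open Function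

theorem half_norm_le_max_norm_norm_sub {E : Type*} [SeminormedAddCommGroup E] (v y : E) :
    ‖v‖ / 2 ≤ max ‖y‖ ‖y - v‖ := by
  have : ‖v‖ ≤ ‖y‖ + ‖y - v‖ := by
    simpa only [sub_sub_cancel] using norm_sub_le y (y - v)
  cases max_cases ‖y‖ ‖y - v‖ <;> linarith

theorem LinearMap.injOn_orthogonal_ker {E F : Type*} [NormedAddCommGroup E]
    [InnerProductSpace ℝ E] [AddCommGroup F] [Module ℝ F] (A : E →ₗ[ℝ] F) :
    Set.InjOn A (LinearMap.ker A)ᗮ := by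
  intro x hx y hy hxy
  have hker : x - y ∈ LinearMap.ker A := by simp [hxy]
  exact sub_eq_zero.mp <| Submodule.disjoint_def.mp (Submodule.orthogonal_disjoint _) _ hker
    (Submodule.sub_mem _ hx hy)

section WorstError

variable {N m : ℕ} {A : EuclideanSpace ℝ (Fin N) →ₗ[ℝ] EuclideanSpace ℝ (Fin m)}
  {M₁ : Set (EuclideanSpace ℝ (Fin N))} {φ : EuclideanSpace ℝ (Fin m) → EuclideanSpace ℝ (Fin N)}

theorem ofReal_norm_le_worstError {x : EuclideanSpace ℝ (Fin N)} (hx : x ∈ M₁) :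
    ENNReal.ofReal ‖φ (A x) - x‖ ≤ worstError A M₁ φ := by
  rw [ofReal_norm]
  exact le_iSup (fun x : M₁ => (‖φ (A x) - x‖₊ : ℝ≥0∞)) ⟨x, hx⟩

theorem worstError_le {c : ℝ≥0∞} (h : ∀ x ∈ M₁, ENNReal.ofReal ‖φ (A x) - x‖ ≤ c) :
    worstError A M₁ φ ≤ c :=
  iSup_le fun x => by simpa only [ofReal_norm, enorm_eq_nnnorm] using h x x.2

theorem ofReal_half_norm_le_worstError {v : EuclideanSpace ℝ (Fin N)} (hv : A v = 0)
    (h0 : 0 ∈ M₁) (hvM : v ∈ M₁) (φ : EuclideanSpace ℝ (Fin m) → EuclideanSpace ℝ (Fin N)) :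
    ENNReal.ofReal (‖v‖ / 2) ≤ worstError A M₁ φ := by
  have at0 := ofReal_norm_le_worstError (A := A) (φ := φ) h0
  have atv := ofReal_norm_le_worstError (A := A) (φ := φ) hvM
  rw [map_zero, sub_zero] at at0
  rw [hv] at atv
  rcases le_max_iff.mp (half_norm_le_max_norm_norm_sub v (φ 0)) with h | h
  · exact (ENNReal.ofReal_le_ofReal h).trans at0
  · exact (ENNReal.ofReal_le_ofReal h).trans atv

theorem worstError_union_zero_ker_eq {S : Set (EuclideanSpace ℝ (Fin N))}
    {v : EuclideanSpace ℝ (Fin N)} (hv : A v = 0) (hφS : ∀ s ∈ S, φ (A s) = s)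
    (hφ0 : φ 0 = (2 : ℝ)⁻¹ • v) :
    worstError A (S ∪ {0, v}) φ = ENNReal.ofReal (‖v‖ / 2) := by
  have half : ‖(2 : ℝ)⁻¹ • v‖ = ‖v‖ / 2 := by
    rw [norm_smul, norm_inv, Real.norm_two, inv_mul_eq_div]
  refine le_antisymm (worstError_le ?_) (ofReal_half_norm_le_worstError hv (by simp) (by simp) φ)
  rintro x (hx | hx | hx)
  · simp [hφS x hx]
  · rw [show x = 0 from hx, map_zero, sub_zero, hφ0, half]
  · rw [show x = v from hx, hv, hφ0, show (2 : ℝ)⁻¹ • v - v = -((2 : ℝ)⁻¹ • v) by module,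
      norm_neg, half]

end WorstError

theorem stmt_1_general (N m : ℕ)
    (A : EuclideanSpace ℝ (Fin N) →ₗ[ℝ] EuclideanSpace ℝ (Fin m))
    (v : EuclideanSpace ℝ (Fin N)) (hv : v ∈ LinearMap.ker A)
    (S : Finset (EuclideanSpace ℝ (Fin N)))
    (hS : ∀ s ∈ S, s ∈ (LinearMap.ker A)ᗮ)
    (h0S : (0 : EuclideanSpace ℝ (Fin N)) ∉ S) :
    optConst A ((S : Set (EuclideanSpace ℝ (Fin N))) ∪ {0, v}) = ENNReal.ofReal (‖v‖ / 2) ∧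
    ∃ φ : EuclideanSpace ℝ (Fin m) → EuclideanSpace ℝ (Fin N),
      (∀ s ∈ S, φ (A s) = s) ∧ φ 0 = (2 : ℝ)⁻¹ • v ∧
      worstError A ((S : Set (EuclideanSpace ℝ (Fin N))) ∪ {0, v}) φ =
        ENNReal.ofReal (‖v‖ / 2) := by
  classical
  rw [LinearMap.mem_ker] at hv
  have hinj : Injective ((S : Set _).domRestrict A) :=
    Set.injOn_iff_injective.mp ((LinearMap.injOn_orthogonal_ker A).mono hS)
  set φ := extend ((S : Set _).domRestrict A) Subtype.val fun _ => (2 : ℝ)⁻¹ • v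
  have hφS : ∀ s ∈ S, φ (A s) = s := fun s hs => hinj.extend_apply _ _ ⟨s, hs⟩
  have hφ0 : φ 0 = (2 : ℝ)⁻¹ • v := by
    refine extend_apply' _ _ _ fun ⟨⟨s, hs⟩, hAs⟩ => h0S ?_
    rwa [LinearMap.injOn_orthogonal_ker A (hS s hs) (Submodule.zero_mem _)
      (hAs.trans (map_zero A).symm)] at hs
  have hφ := worstError_union_zero_ker_eq hv hφS hφ0
  refine ⟨le_antisymm ?_ (le_iInf (ofReal_half_norm_le_worstError hv (by simp) (by simp))),
    φ, hφS, hφ0, hφ⟩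
  exact hφ ▸ iInf_le _ φ

/-- for `M₁ = S ∪ {0, v}` with `S ⊆ (ker A)ᗮ` finite, `0 ∉ S` and
`0 ≠ v ∈ ker A`, the optimality constant equals `‖v‖/2` and is attained by a map that
interpolates `S` and sends `0` to `v/2`. -/
theorem stmt_1 (N m : ℕ)
    (A : EuclideanSpace ℝ (Fin N) →ₗ[ℝ] EuclideanSpace ℝ (Fin m))
    (v : EuclideanSpace ℝ (Fin N)) (hv : v ∈ LinearMap.ker A) (hv0 : v ≠ 0)
    (S : Finset (EuclideanSpace ℝ (Fin N)))
    (hS : ∀ s ∈ S, s ∈ (LinearMap.ker A)ᗮ)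
    (h0S : (0 : EuclideanSpace ℝ (Fin N)) ∉ S) :
    optConst A ((S : Set (EuclideanSpace ℝ (Fin N))) ∪ {0, v}) = ENNReal.ofReal (‖v‖ / 2) ∧
    ∃ φ : EuclideanSpace ℝ (Fin m) → EuclideanSpace ℝ (Fin N),
      (∀ s ∈ S, φ (A s) = s) ∧ φ 0 = (2 : ℝ)⁻¹ • v ∧
      worstError A ((S : Set (EuclideanSpace ℝ (Fin N))) ∪ {0, v}) φ =
        ENNReal.ofReal (‖v‖ / 2) :=
  stmt_1_general N m A v hv S hS h0S
end

section
/- Let A : ℝ^N → ℝ^m be a nonzero linear map with nontrivial kernel, v ∈ ker A with v ≠ 0, e ∈ (ker A)ᗮ with ‖e‖ = 1, and θ = min(1, ‖A‖_op^{-1}). For n ∈ ℕ set wₙ = v + θ 4^{-n} e. Then: (i) ‖(wₙ, A wₙ) − (v, 0)‖ ≤ √2 · 4^{-n} in ℝ^N × ℝ^m (with the ℓ² product norm), so the data pair (wₙ, A wₙ) is within √2·4^{-n} of the pair (v, 0); (ii) nevertheless, every map φ₁ : ℝ^m → ℝ^N with φ₁(0) = 0 (in particular any map achieving worst-case error 0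 on a set containing 0) and every map φ₂ : ℝ^m → ℝ^N whose worst-case error on {0, v} is at most ‖v‖/2 (in particular any optimal map for a set containing {0, v}) satisfy ‖φ₁(0) − φ₂(0)‖ = ‖v‖/2, and hence sup_{y ∈ ℝ^m} ‖φ₁(y) − φ₂(y)‖ ≥ ‖v‖/2. -/
open scoped ENNReal

/-! A vector `v ∈ ker A` and `0` have the same measurement `A v = A 0 = 0`, so a single
reconstruction value `φ₂ 0` must lie within `‖v‖/2` of both; by the triangle inequality it
sits exactly at distance `‖v‖/2` from `0 = φ₁ 0`. Meanwhile the perturbation `θ 4⁻ⁿ e` moves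
both the point and, since `θ ‖A‖ ≤ 1`, its data by at most `4⁻ⁿ`. -/

lemma min_one_inv_mul_le_one {c : ℝ} (hc : 0 ≤ c) : min 1 c⁻¹ * c ≤ 1 := by
  rcases hc.eq_or_lt with rfl | hc
  · simp
  · calc min 1 c⁻¹ * c ≤ c⁻¹ * c := by gcongr; exact min_le_right _ _
      _ = 1 := inv_mul_cancel₀ hc.ne'

section Perturbation

variable {E F : Type*} [SeminormedAddCommGroup E] [NormedSpace ℝ E]
  [SeminormedAddCommGroup F] [NormedSpace ℝ F] {θ r : ℝ} {e : E}

lemma norm_mul_smul_le (hθ₀ : 0 ≤ θ) (hθ₁ : θ ≤ 1) (hr : 0 ≤ r) (he : ‖e‖ ≤ 1) :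
    ‖(θ * r) • e‖ ≤ r :=
  calc ‖(θ * r) • e‖ = θ * r * ‖e‖ := by rw [norm_smul, Real.norm_of_nonneg (by positivity)]
    _ ≤ 1 * r * 1 := by gcongr
    _ = r := by ring

lemma norm_apply_mul_smul_le (f : E →L[ℝ] F) (hθ₀ : 0 ≤ θ) (hθf : θ * ‖f‖ ≤ 1) (hr : 0 ≤ r)
    (he : ‖e‖ ≤ 1) : ‖f ((θ * r) • e)‖ ≤ r :=
  calc ‖f ((θ * r) • e)‖ ≤ ‖f‖ * ‖(θ * r) • e‖ := f.le_opNorm _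
    _ = θ * ‖f‖ * r * ‖e‖ := by rw [norm_smul, Real.norm_of_nonneg (by positivity)]; ring
    _ ≤ 1 * r * 1 := by gcongr
    _ = r := by ring

end Perturbation

lemma sqrt_sq_add_sq_le {a b r : ℝ} (ha : 0 ≤ a) (hb : 0 ≤ b) (har : a ≤ r) (hbr : b ≤ r) :
    Real.sqrt (a ^ 2 + b ^ 2) ≤ Real.sqrt 2 * r := by
  have hr : 0 ≤ r := ha.trans har
  calc Real.sqrt (a ^ 2 + b ^ 2) ≤ Real.sqrt (2 * r ^ 2) := by gcongr; nlinarith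
    _ = Real.sqrt 2 * r := by rw [Real.sqrt_mul zero_le_two, Real.sqrt_sq hr]

lemma norm_eq_half_of_norm_le_half_of_norm_sub_le_half {E : Type*} [SeminormedAddCommGroup E]
    {x v : E} (hx : ‖x‖ ≤ ‖v‖ / 2) (hxv : ‖x - v‖ ≤ ‖v‖ / 2) : ‖x‖ = ‖v‖ / 2 := by
  have := norm_sub_le x (x - v)
  rw [sub_sub_cancel] at this
  linarith

lemma norm_sub_le_of_worstError_le {N m : ℕ}
    {A : EuclideanSpace ℝ (Fin N) →ₗ[ℝ] EuclideanSpace ℝ (Fin m)}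
    {M₁ : Set (EuclideanSpace ℝ (Fin N))} {φ : EuclideanSpace ℝ (Fin m) → EuclideanSpace ℝ (Fin N)}
    {c : ℝ} (hc : 0 ≤ c) (hφ : worstError A M₁ φ ≤ ENNReal.ofReal c)
    {x : EuclideanSpace ℝ (Fin N)} (hx : x ∈ M₁) : ‖φ (A x) - x‖ ≤ c := by
  have : ENNReal.ofReal ‖φ (A x) - x‖ ≤ ENNReal.ofReal c := by
    rw [ofReal_norm]
    exact (le_iSup (fun z : M₁ => (‖φ (A z) - z‖₊ : ℝ≥0∞)) ⟨x, hx⟩).trans hφ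
  exact (ENNReal.ofReal_le_ofReal_iff hc).1 this

theorem stmt_3_general (N m : ℕ)
    (A : EuclideanSpace ℝ (Fin N) →ₗ[ℝ] EuclideanSpace ℝ (Fin m))
    (v : EuclideanSpace ℝ (Fin N)) (hv : v ∈ LinearMap.ker A)
    (e : EuclideanSpace ℝ (Fin N)) (henorm : ‖e‖ = 1)
    (θ : ℝ) (hθ : θ = min 1 ‖LinearMap.toContinuousLinearMap A‖⁻¹)
    (n : ℕ) (w : EuclideanSpace ℝ (Fin N)) (hw : w = v + (θ * (4 : ℝ)⁻¹ ^ n) • e) :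
    Real.sqrt (‖w - v‖ ^ 2 + ‖A w - 0‖ ^ 2) ≤ Real.sqrt 2 * (4 : ℝ)⁻¹ ^ n ∧
    ∀ φ₁ φ₂ : EuclideanSpace ℝ (Fin m) → EuclideanSpace ℝ (Fin N),
      φ₁ 0 = 0 →
      worstError A {0, v} φ₂ ≤ ENNReal.ofReal (‖v‖ / 2) →
      ‖φ₁ 0 - φ₂ 0‖ = ‖v‖ / 2 ∧
      ENNReal.ofReal (‖v‖ / 2) ≤
        ⨆ y : EuclideanSpace ℝ (Fin m), (‖φ₁ y - φ₂ y‖₊ : ℝ≥0∞) := by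
  rw [LinearMap.mem_ker] at hv
  set f := LinearMap.toContinuousLinearMap A
  have hθ₀ : 0 ≤ θ := hθ ▸ le_min zero_le_one (inv_nonneg.2 (norm_nonneg f))
  have hθ₁ : θ ≤ 1 := hθ ▸ min_le_left _ _
  have hθf : θ * ‖f‖ ≤ 1 := hθ ▸ min_one_inv_mul_le_one (norm_nonneg f)
  have hr : (0 : ℝ) ≤ 4⁻¹ ^ n := by positivity
  constructor
  · have hAw : A w = f ((θ * 4⁻¹ ^ n) • e) := by simp [f, hw, hv]
    rw [sub_zero, hAw, hw, add_sub_cancel_left]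
    exact sqrt_sq_add_sq_le (norm_nonneg _) (norm_nonneg _)
      (norm_mul_smul_le hθ₀ hθ₁ hr henorm.le) (norm_apply_mul_smul_le f hθ₀ hθf hr henorm.le)
  · intro φ₁ φ₂ hφ₁ hφ₂
    have hv2 : 0 ≤ ‖v‖ / 2 := by positivity
    have h0 := norm_sub_le_of_worstError_le hv2 hφ₂ (Set.mem_insert 0 {v})
    have h1 := norm_sub_le_of_worstError_le hv2 hφ₂ (Set.mem_insert_of_mem 0 rfl)
    rw [map_zero, sub_zero] at h0
    rw [hv] at h1
    have key : ‖φ₁ 0 - φ₂ 0‖ = ‖v‖ / 2 := by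
      rw [hφ₁, zero_sub, norm_neg, norm_eq_half_of_norm_le_half_of_norm_sub_le_half h0 h1]
    refine ⟨key, ?_⟩
    rw [← key, ofReal_norm]
    exact le_iSup (fun y => (‖φ₁ y - φ₂ y‖₊ : ℝ≥0∞)) 0

/-- the data pairs `(wₙ, A wₙ)` with `wₙ = v + θ 4⁻ⁿ e` converge to `(v, 0)`
at rate `√2 · 4⁻ⁿ` (ℓ² product norm), yet any map fixing `0` and any map with worst-case
error at most `‖v‖/2` on `{0, v}` are uniformly `‖v‖/2` apart. -/
theorem stmt_3 (N m : ℕ)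
    (A : EuclideanSpace ℝ (Fin N) →ₗ[ℝ] EuclideanSpace ℝ (Fin m)) (hA : A ≠ 0)
    (hker : LinearMap.ker A ≠ ⊥)
    (v : EuclideanSpace ℝ (Fin N)) (hv : v ∈ LinearMap.ker A) (hv0 : v ≠ 0)
    (e : EuclideanSpace ℝ (Fin N)) (he : e ∈ (LinearMap.ker A)ᗮ) (henorm : ‖e‖ = 1)
    (θ : ℝ) (hθ : θ = min 1 ‖LinearMap.toContinuousLinearMap A‖⁻¹)
    (n : ℕ) (w : EuclideanSpace ℝ (Fin N)) (hw : w = v + (θ * (4 : ℝ)⁻¹ ^ n) • e) :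
    Real.sqrt (‖w - v‖ ^ 2 + ‖A w - 0‖ ^ 2) ≤ Real.sqrt 2 * (4 : ℝ)⁻¹ ^ n ∧
    ∀ φ₁ φ₂ : EuclideanSpace ℝ (Fin m) → EuclideanSpace ℝ (Fin N),
      φ₁ 0 = 0 →
      worstError A {0, v} φ₂ ≤ ENNReal.ofReal (‖v‖ / 2) →
      ‖φ₁ 0 - φ₂ 0‖ = ‖v‖ / 2 ∧
      ENNReal.ofReal (‖v‖ / 2) ≤
        ⨆ y : EuclideanSpace ℝ (Fin m), (‖φ₁ y - φ₂ y‖₊ : ℝ≥0∞) :=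
  stmt_3_general N m A v hv e henorm θ hθ n w hw
end

section
/- Suppose y₁, …, y_ℓ ∈ ℝ^m are pairwise distinct and x₁, …, x_ℓ ∈ ℝ^N are arbitrary. Then the ℓ×ℓ matrix R with entries R_{ij} = 1/(1 + ‖y_i − y_j‖²) is symmetric positive definite (in particular invertible), and the function s : ℝ^m → ℝ^N defined by s(y) = X · R⁻¹ · Φ(y) interpolates the data: s(y_i) = x_i for every i = 1, …, ℓ. -/
open scoped ENNReal

/-- The RBF kernel matrix `R` with entries `R i j = 1/(1 + ‖y i - y j‖²)`. -/
noncomputable def Rmat {m ℓ : ℕ} (y : Fin ℓ → EuclideanSpace ℝ (Fin m)) :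
    Matrix (Fin ℓ) (Fin ℓ) ℝ :=
  Matrix.of fun i j => (1 + ‖y i - y j‖ ^ 2)⁻¹

/-- The `N × ℓ` matrix whose columns are `x 1, …, x ℓ`. -/
def Xmat {N ℓ : ℕ} (x : Fin ℓ → EuclideanSpace ℝ (Fin N)) : Matrix (Fin N) (Fin ℓ) ℝ :=
  Matrix.of fun a i => x i a

/-- The feature map `Φ(z) = (1/(1+‖z-y₁‖²), …, 1/(1+‖z-y_ℓ‖²))`. -/
noncomputable def Phivec {m ℓ : ℕ} (y : Fin ℓ → EuclideanSpace ℝ (Fin m))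
    (z : EuclideanSpace ℝ (Fin m)) : Fin ℓ → ℝ :=
  fun i => (1 + ‖z - y i‖ ^ 2)⁻¹

/-!
For `r ≥ 0`, `(1 + r)⁻¹ = ∫₀^∞ e^{-t} e^{-t r} dt`, so the quadratic form of `R` is the integral
of `e^{-t} q(t)`, where `q(t) = cᵀ G_t c` is the quadratic form of the Gaussian kernel matrix
`G_t = (exp (-t ‖y i - y j‖²))`. Each `G_t` is positive semidefinite: it is a Hadamard product of
a rank-one Gram matrix with the entrywise exponential of the Gram matrix `2t ⟪y i, y j⟫`, and the
entrywise exponential of a positive semidefinite matrix is a limit of sums of Hadamard powers,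
which are positive semidefinite by the Schur product theorem. For distinct nodes `G_t → 1` as
`t → ∞`, so the continuous integrand is positive somewhere and `cᵀ R c > 0`. Interpolation is then
the identity `X R⁻¹ (R eᵢ) = X eᵢ`, since `Φ(yᵢ)` is the `i`-th column of `R`.
-/

open Matrix Real Filter Topology MeasureTheory Set

namespace Matrix

variable {ι : Type*} [Fintype ι]

theorem PosSemidef.map_pow {A : Matrix ι ι ℝ} (hA : A.PosSemidef) :
    ∀ k : ℕ, (A.map (· ^ k)).PosSemidef
  | 0 => by
    have hones : A.map (· ^ 0) = gram ℝ fun _ : ι => (1 : ℝ) := by ext; simp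
    exact hones ▸ posSemidef_gram ℝ _
  | k + 1 => by
    have hsucc : A.map (· ^ (k + 1)) = A.map (· ^ k) ⊙ A := by ext; simp [pow_succ]
    exact hsucc ▸ (hA.map_pow k).hadamard hA

theorem PosSemidef.map_exp {A : Matrix ι ι ℝ} (hA : A.PosSemidef) :
    (A.map exp).PosSemidef := by
  refine posSemidef_iff_dotProduct_mulVec.mpr ⟨hA.isHermitian.map _ fun _ => rfl, fun x => ?_⟩
  have hsum : HasSum (fun k : ℕ => (k.factorial : ℝ)⁻¹ * (star x ⬝ᵥ A.map (· ^ k) *ᵥ x))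
      (star x ⬝ᵥ A.map exp *ᵥ x) := by
    simp only [dotProduct, mulVec, Finset.mul_sum]
    refine hasSum_sum fun i _ => hasSum_sum fun j _ => ?_
    have h := (exp_eq_exp_ℝ ▸ NormedSpace.expSeries_div_hasSum_exp (A i j)).mul_left
      (star x i * x j)
    rw [show star x i * (A.map exp i j * x j) = star x i * x j * exp (A i j) by
      rw [map_apply]; ring]
    exact h.congr_fun fun k => by rw [map_apply]; ring
  exact hsum.nonneg fun k => mul_nonneg (by positivity) ((hA.map_pow k).dotProduct_mulVec_nonneg x)

theorem dotProduct_mulVec_self_eq_sum (A : Matrix ι ι ℝ) (c : ι → ℝ) :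
    c ⬝ᵥ A *ᵥ c = ∑ i, ∑ j, c i * c j * A i j := by
  simp only [dotProduct, mulVec, Finset.mul_sum]
  exact Finset.sum_congr rfl fun i _ => Finset.sum_congr rfl fun j _ => by ring

theorem mul_nonsing_inv_mulVec_col {n R : Type*} [DecidableEq ι] [CommRing R]
    (X : Matrix n ι R) {A : Matrix ι ι R} (hA : IsUnit A.det) (i : ι) :
    (X * A⁻¹) *ᵥ A.col i = X.col i := by
  rw [← mulVec_single_one, mulVec_mulVec, Matrix.mul_assoc, nonsing_inv_mul _ hA, Matrix.mul_one,
    mulVec_single_one]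

end Matrix

theorem inv_eq_integral_exp_neg_mul {a : ℝ} (ha : 0 < a) :
    a⁻¹ = ∫ t in Ioi 0, exp (-a * t) := by
  rw [integral_exp_mul_Ioi (neg_lt_zero.mpr ha)]
  simp

theorem setIntegral_pos_of_continuousOn {X : Type*} [TopologicalSpace X] [MeasurableSpace X]
    [OpensMeasurableSpace X] {μ : Measure X} [μ.IsOpenPosMeasure] {f : X → ℝ} {s : Set X}
    (hs : IsOpen s) (hf : ContinuousOn f s) (hfi : IntegrableOn f s μ)
    (hf_nonneg : ∀ x ∈ s, 0 ≤ f x) {x₀ : X} (hx₀ : x₀ ∈ s) (hf_pos : 0 < f x₀) :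
    0 < ∫ x in s, f x ∂μ := by
  rw [setIntegral_pos_iff_support_of_nonneg_ae
    ((ae_restrict_iff' hs.measurableSet).mpr (ae_of_all _ hf_nonneg)) hfi]
  refine (hf.isOpen_inter_preimage hs isOpen_Ioi).measure_pos μ ⟨x₀, hx₀, hf_pos⟩ |>.trans_le ?_
  exact measure_mono fun x hx => ⟨hx.2.ne', hx.1⟩

section GaussianKernel

variable {ι E : Type*} [NormedAddCommGroup E]

noncomputable def gaussianKernelMatrix (v : ι → E) (t : ℝ) : Matrix ι ι ℝ :=
  of fun i j => exp (-(t * ‖v i - v j‖ ^ 2))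

theorem continuous_gaussianKernelMatrix (v : ι → E) : Continuous (gaussianKernelMatrix v) :=
  continuous_matrix fun i j => by unfold gaussianKernelMatrix; fun_prop

theorem tendsto_gaussianKernelMatrix_atTop [DecidableEq ι] {v : ι → E} (hv : v.Injective) :
    Tendsto (gaussianKernelMatrix v) atTop (𝓝 1) := by
  refine tendsto_pi_nhds.mpr fun i => tendsto_pi_nhds.mpr fun j => ?_
  rcases eq_or_ne i j with rfl | hij
  · simp [gaussianKernelMatrix]
  · have hd : 0 < ‖v i - v j‖ ^ 2 := by
      have := sub_ne_zero.mpr (hv.ne hij)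
      positivity
    simp only [gaussianKernelMatrix, of_apply, one_apply_ne hij]
    exact tendsto_exp_atBot.comp (tendsto_neg_atTop_atBot.comp (tendsto_id.atTop_mul_const hd))

theorem exists_pos_dotProduct_gaussianKernelMatrix_mulVec [Fintype ι] {v : ι → E}
    (hv : v.Injective) {c : ι → ℝ} (hc : c ≠ 0) :
    ∃ t, 0 < c ⬝ᵥ gaussianKernelMatrix v t *ᵥ c ∧ 0 < t := by
  classical
  have hQ : Continuous fun A : Matrix ι ι ℝ => c ⬝ᵥ A *ᵥ c :=
    continuous_const.dotProduct (continuous_id.matrix_mulVec continuous_const)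
  have hlim : Tendsto (fun t => c ⬝ᵥ gaussianKernelMatrix v t *ᵥ c) atTop
      (𝓝 (c ⬝ᵥ (1 : Matrix ι ι ℝ) *ᵥ c)) :=
    (hQ.tendsto 1).comp (tendsto_gaussianKernelMatrix_atTop hv)
  exact ((hlim.eventually (eventually_gt_nhds (PosDef.one.dotProduct_mulVec_pos hc))).and
    (eventually_gt_atTop 0)).exists

theorem exp_neg_mul_dotProduct_gaussianKernelMatrix_mulVec [Fintype ι] (v : ι → E)
    (c : ι → ℝ) (t : ℝ) :
    exp (-t) * (c ⬝ᵥ gaussianKernelMatrix v t *ᵥ c) =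
      ∑ i, ∑ j, c i * c j * exp (-(1 + ‖v i - v j‖ ^ 2) * t) := by
  simp only [dotProduct_mulVec_self_eq_sum, gaussianKernelMatrix, of_apply, Finset.mul_sum]
  refine Finset.sum_congr rfl fun i _ => Finset.sum_congr rfl fun j _ => ?_
  rw [show -(1 + ‖v i - v j‖ ^ 2) * t = -t + -(t * ‖v i - v j‖ ^ 2) by ring, exp_add]
  ring

variable [InnerProductSpace ℝ E]

theorem gaussianKernelMatrix_eq_hadamard (v : ι → E) (t : ℝ) :
    gaussianKernelMatrix v t =
      gram ℝ (fun i => exp (-(t * ‖v i‖ ^ 2))) ⊙ ((2 * t) • gram ℝ v).map exp := by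
  ext i j
  simp only [gaussianKernelMatrix, of_apply, hadamard_apply, gram_apply, map_apply,
    Matrix.smul_apply, smul_eq_mul, norm_sub_sq_real, Real.inner_apply, ← exp_add]
  ring_nf

theorem posSemidef_gaussianKernelMatrix [Fintype ι] (v : ι → E) {t : ℝ} (ht : 0 ≤ t) :
    (gaussianKernelMatrix v t).PosSemidef := by
  rw [gaussianKernelMatrix_eq_hadamard]
  exact (posSemidef_gram ℝ _).hadamard
    (PosSemidef.map_exp ((posSemidef_gram ℝ v).smul (by positivity : (0 : ℝ) ≤ 2 * t)))

end GaussianKernel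

section InverseMultiquadric

variable {ι E : Type*} [Fintype ι] [NormedAddCommGroup E]

theorem dotProduct_inverseMultiquadric_mulVec_eq_integral (v : ι → E) (c : ι → ℝ) :
    c ⬝ᵥ (of fun i j => (1 + ‖v i - v j‖ ^ 2)⁻¹ : Matrix ι ι ℝ) *ᵥ c =
      ∫ t in Ioi 0, exp (-t) * (c ⬝ᵥ gaussianKernelMatrix v t *ᵥ c) := by
  have hint : ∀ i j, IntegrableOn (fun t => c i * c j * exp (-(1 + ‖v i - v j‖ ^ 2) * t))
      (Ioi 0) := fun i j => (exp_neg_integrableOn_Ioi 0 (by positivity)).const_mul _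
  simp only [exp_neg_mul_dotProduct_gaussianKernelMatrix_mulVec]
  rw [dotProduct_mulVec_self_eq_sum]
  simp only [of_apply]
  rw [integral_finsetSum _ fun i _ => integrable_finsetSum _ fun j _ => hint i j]
  refine Finset.sum_congr rfl fun i _ => ?_
  rw [integral_finsetSum _ fun j _ => hint i j]
  refine Finset.sum_congr rfl fun j _ => ?_
  rw [integral_const_mul, inv_eq_integral_exp_neg_mul (by positivity)]

theorem integrableOn_exp_neg_mul_dotProduct_gaussianKernelMatrix_mulVec (v : ι → E)
    (c : ι → ℝ) :
    IntegrableOn (fun t => exp (-t) * (c ⬝ᵥ gaussianKernelMatrix v t *ᵥ c)) (Ioi 0) := by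
  simp only [exp_neg_mul_dotProduct_gaussianKernelMatrix_mulVec]
  exact integrable_finsetSum _ fun i _ => integrable_finsetSum _ fun j _ =>
    (exp_neg_integrableOn_Ioi 0 (by positivity)).const_mul _

theorem posDef_inverseMultiquadric [InnerProductSpace ℝ E] {v : ι → E} (hv : v.Injective) :
    (of fun i j => (1 + ‖v i - v j‖ ^ 2)⁻¹ : Matrix ι ι ℝ).PosDef := by
  refine posDef_iff_dotProduct_mulVec.mpr ⟨?_, fun c hc => ?_⟩
  · exact isHermitian_iff_isSymm.mpr <| IsSymm.ext fun i j => by simp [norm_sub_rev]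
  obtain ⟨t₀, hq_pos, ht₀⟩ := exists_pos_dotProduct_gaussianKernelMatrix_mulVec hv hc
  have hcont : Continuous fun t => exp (-t) * (c ⬝ᵥ gaussianKernelMatrix v t *ᵥ c) :=
    continuous_neg.rexp.mul <| continuous_const.dotProduct <|
      (continuous_gaussianKernelMatrix v).matrix_mulVec continuous_const
  rw [star_trivial, dotProduct_inverseMultiquadric_mulVec_eq_integral]
  exact setIntegral_pos_of_continuousOn isOpen_Ioi hcont.continuousOn
    (integrableOn_exp_neg_mul_dotProduct_gaussianKernelMatrix_mulVec v c)
    (fun t ht => mul_nonneg (exp_pos _).le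
      ((posSemidef_gaussianKernelMatrix v ht.le).dotProduct_mulVec_nonneg c))
    ht₀ (mul_pos (exp_pos _) hq_pos)

end InverseMultiquadric

theorem phivec_eq_col_rmat {m ℓ : ℕ} (y : Fin ℓ → EuclideanSpace ℝ (Fin m)) (i : Fin ℓ) :
    Phivec y (y i) = (Rmat y).col i := by
  ext j
  simp [Phivec, Rmat, norm_sub_rev]

theorem stmt_4_general (m N ℓ : ℕ)
    (y : Fin ℓ → EuclideanSpace ℝ (Fin m)) (hy : Function.Injective y)
    (x : Fin ℓ → EuclideanSpace ℝ (Fin N)) :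
    (Rmat y).IsSymm ∧ (Rmat y).PosDef ∧ IsUnit (Rmat y).det ∧
    ∀ (i : Fin ℓ) (a : Fin N),
      (Xmat x * (Rmat y)⁻¹).mulVec (Phivec y (y i)) a = x i a := by
  have hpd : (Rmat y).PosDef := posDef_inverseMultiquadric hy
  have hdet : IsUnit (Rmat y).det := hpd.det_pos.ne'.isUnit
  refine ⟨isHermitian_iff_isSymm.mp hpd.isHermitian, hpd, hdet, fun i a => ?_⟩
  rw [phivec_eq_col_rmat, mul_nonsing_inv_mulVec_col _ hdet]
  rfl

/-- for pairwise distinct nodes `y i`, the matrix `R` is symmetric positive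
definite (in particular invertible), and `s(y) = X R⁻¹ Φ(y)` interpolates: `s (y i) = x i`. -/
theorem stmt_4 (m N ℓ : ℕ) (hℓ : 1 ≤ ℓ)
    (y : Fin ℓ → EuclideanSpace ℝ (Fin m)) (hy : Function.Injective y)
    (x : Fin ℓ → EuclideanSpace ℝ (Fin N)) :
    (Rmat y).IsSymm ∧ (Rmat y).PosDef ∧ IsUnit (Rmat y).det ∧
    ∀ (i : Fin ℓ) (a : Fin N),
      (Xmat x * (Rmat y)⁻¹).mulVec (Phivec y (y i)) a = x i a :=
  stmt_4_general m N ℓ y hy x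
end

section
/- Let m ≥ 2, ℓ ≥ 1, j ≥ 1 and k_R ∈ ℕ. Suppose y₁, …, y_ℓ ∈ ℝ^m are pairwise distinct with ‖yᵢ‖ ≤ 1 and x₁, …, x_ℓ ∈ ℝ^N satisfy ‖xᵢ‖ ≤ 1, and let R, X, Φ be built from these data; assume R is invertible with ‖R⁻¹‖_op ≤ 2^{k_R}. Let x̃₁, …, x̃_ℓ ∈ ℝ^N and ỹ₁, …, ỹ_ℓ ∈ ℝ^m be approximations with ‖x̃ᵢ − xᵢ‖ ≤ 2^{-r} and ‖ỹᵢ − yᵢ‖ ≤ 2^{-r} for all i, with the ỹᵢ pairwise distinct, and let X̃, R̃, Φ̃ be built from the approximate data. If 2^{-r} ≤ min{ (1/7)·(1/4)·(1/(2m))·(1/ℓ²)·2^{-2 k_R}·2^{-j}, (1/7)·(1/ℓ)·2^{-k_R}·2^{-j} }, then R̃ is invertible and sup_{y ∈ ℝ^m} ‖X̃ R̃⁻¹ Φ̃(y) − X R⁻¹ Φ(y)‖ ≤ 2^{-j}. -/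
/-!
Since `t ↦ 1/(1+t²)` is 1-Lipschitz, the entries of `R̃ - R` are at most `2·2⁻ʳ`, so
`‖R⁻¹(R̃ - R)‖ ≤ 2/7`; then `R̃ = R(1 + R⁻¹(R̃ - R))` is invertible by a Neumann series, with
`‖R̃⁻¹‖ ≤ (7/5)‖R⁻¹‖` and `‖R̃⁻¹ - R⁻¹‖ ≤ ‖R̃⁻¹‖‖R̃ - R‖‖R⁻¹‖`. Splitting
`X̃R̃⁻¹Φ̃ - XR⁻¹Φ = (X̃ - X)R̃⁻¹Φ̃ + X(R̃⁻¹ - R⁻¹)Φ̃ + XR⁻¹(Φ̃ - Φ)` and bounding every operator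
norm by the Frobenius norm (`‖X‖, ‖Φ̃‖ ≤ √ℓ`, their perturbations `≤ √ℓ·2⁻ʳ`) gives the bound
`(12/5)·ℓ2^{k_R}2⁻ʳ + (14/5)·ℓ²2^{2k_R}2⁻ʳ`, which the threshold on `2⁻ʳ` keeps below `2⁻ʲ`.
-/

open scoped ENNReal

/-- Operator norm of a real matrix induced by the ℓ² norms. -/
noncomputable def matOpNorm {k l : ℕ} (M : Matrix (Fin k) (Fin l) ℝ) : ℝ :=
  ‖LinearMap.toContinuousLinearMap (Matrix.toEuclideanLin M)‖

/-- Interpret a plain vector as an element of Euclidean space (ℓ² norm). -/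
noncomputable def toEuc {N : ℕ} (w : Fin N → ℝ) : EuclideanSpace ℝ (Fin N) :=
  (EuclideanSpace.equiv (Fin N) ℝ).symm w

open scoped Matrix Matrix.Norms.L2Operator

namespace Matrix

section Perturbation

variable {𝕜 n : Type*} [RCLike 𝕜] [Fintype n] [DecidableEq n]

theorem isUnit_det_of_norm_inv_mul_sub_lt_one {A B : Matrix n n 𝕜} (hA : IsUnit A.det)
    (h : ‖A⁻¹ * (B - A)‖ < 1) : IsUnit B.det := by
  have hB : B = A * (1 - -(A⁻¹ * (B - A))) := by
    rw [sub_neg_eq_add, mul_add, mul_one, ← Matrix.mul_assoc, mul_nonsing_inv _ hA,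
      Matrix.one_mul, add_sub_cancel]
  rw [← isUnit_iff_isUnit_det, hB]
  exact ((isUnit_iff_isUnit_det A).2 hA).mul
    (isUnit_one_sub_of_norm_lt_one (by rwa [norm_neg]))

theorem inv_sub_inv_of_isUnit_det {A B : Matrix n n 𝕜} (hA : IsUnit A.det)
    (hB : IsUnit B.det) : B⁻¹ - A⁻¹ = B⁻¹ * (A - B) * A⁻¹ :=
  inv_sub_inv <| by simp only [isUnit_iff_isUnit_det, hA, hB]

theorem norm_inv_sub_inv_le {A B : Matrix n n 𝕜} (hA : IsUnit A.det) (hB : IsUnit B.det) :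
    ‖B⁻¹ - A⁻¹‖ ≤ ‖B⁻¹‖ * ‖B - A‖ * ‖A⁻¹‖ := by
  rw [inv_sub_inv_of_isUnit_det hA hB, norm_sub_rev B A]
  exact (norm_mul_le _ _).trans (by gcongr; exact norm_mul_le _ _)

theorem norm_inv_le_of_norm_inv_mul_sub_le {A B : Matrix n n 𝕜} {δ : ℝ} (hA : IsUnit A.det)
    (hB : IsUnit B.det) (hδ : δ < 1) (h : ‖A⁻¹ * (B - A)‖ ≤ δ) :
    ‖B⁻¹‖ ≤ (1 - δ)⁻¹ * ‖A⁻¹‖ := by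
  have hBinv : B⁻¹ = A⁻¹ - A⁻¹ * (B - A) * B⁻¹ := by
    rw [← inv_sub_inv_of_isUnit_det hB hA, sub_sub_cancel]
  have hle : ‖B⁻¹‖ ≤ ‖A⁻¹‖ + δ * ‖B⁻¹‖ :=
    calc ‖B⁻¹‖ ≤ ‖A⁻¹‖ + ‖A⁻¹ * (B - A) * B⁻¹‖ := by
          conv_lhs => rw [hBinv]
          exact norm_sub_le _ _
      _ ≤ ‖A⁻¹‖ + δ * ‖B⁻¹‖ := by
          gcongr
          exact (norm_mul_le _ _).trans (by gcongr)
  rw [inv_mul_eq_div, le_div_iff₀ (sub_pos.2 hδ)]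
  linarith

theorem isUnit_det_and_inv_bounds_of_norm_sub_le {A B : Matrix n n 𝕜} {K η δ : ℝ}
    (hA : IsUnit A.det) (hAinv : ‖A⁻¹‖ ≤ K) (hBA : ‖B - A‖ ≤ η) (hKη : K * η ≤ δ)
    (hδ : δ < 1) :
    IsUnit B.det ∧ ‖B⁻¹‖ ≤ (1 - δ)⁻¹ * K ∧ ‖B⁻¹ - A⁻¹‖ ≤ (1 - δ)⁻¹ * K * η * K := by
  have hsmall : ‖A⁻¹ * (B - A)‖ ≤ δ :=
    (norm_mul_le _ _).trans ((mul_le_mul hAinv hBA (norm_nonneg _)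
      ((norm_nonneg _).trans hAinv)).trans hKη)
  have hB := isUnit_det_of_norm_inv_mul_sub_lt_one hA (hsmall.trans_lt hδ)
  have hBinv : ‖B⁻¹‖ ≤ (1 - δ)⁻¹ * K :=
    (norm_inv_le_of_norm_inv_mul_sub_le hA hB hδ hsmall).trans
      (mul_le_mul_of_nonneg_left hAinv (inv_nonneg.2 (sub_pos.2 hδ).le))
  have hBinv0 : 0 ≤ (1 - δ)⁻¹ * K := (norm_nonneg _).trans hBinv
  have hη : 0 ≤ η := (norm_nonneg _).trans hBA
  exact ⟨hB, hBinv, (norm_inv_sub_inv_le hA hB).trans <| mul_le_mul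
    (mul_le_mul hBinv hBA (norm_nonneg _) hBinv0) hAinv (norm_nonneg _) (mul_nonneg hBinv0 hη)⟩

end Perturbation

section FrobeniusBounds

variable {m n : Type*} [Fintype m] [Fintype n] [DecidableEq n]

theorem l2_opNorm_le_sqrt_sum_sq (M : Matrix m n ℝ) : ‖M‖ ≤ √(∑ a, ∑ i, M a i ^ 2) := by
  rw [l2_opNorm_def]
  refine ContinuousLinearMap.opNorm_le_bound _ (Real.sqrt_nonneg _) fun v => ?_
  rw [EuclideanSpace.norm_eq, EuclideanSpace.norm_eq, ← Real.sqrt_mul (by positivity),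
    Finset.sum_mul]
  refine Real.sqrt_le_sqrt <| Finset.sum_le_sum fun a _ => ?_
  simp only [Real.norm_eq_abs, sq_abs]
  exact Finset.sum_mul_sq_le_sq_mul_sq _ _ _

theorem l2_opNorm_le_of_sum_sq_col_le {M : Matrix m n ℝ} {c : ℝ} (hc : 0 ≤ c)
    (h : ∀ i, ∑ a, M a i ^ 2 ≤ c ^ 2) : ‖M‖ ≤ √(Fintype.card n) * c := by
  refine (l2_opNorm_le_sqrt_sum_sq M).trans ?_
  rw [← Real.sqrt_sq hc, ← Real.sqrt_mul (by positivity), Finset.sum_comm]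
  refine Real.sqrt_le_sqrt ((Finset.sum_le_sum fun i _ => h i).trans ?_)
  simp

theorem l2_opNorm_le_of_abs_le {M : Matrix m n ℝ} {c : ℝ} (hc : 0 ≤ c)
    (h : ∀ a i, |M a i| ≤ c) : ‖M‖ ≤ √(Fintype.card m * Fintype.card n) * c := by
  refine (l2_opNorm_le_sqrt_sum_sq M).trans ?_
  rw [← Real.sqrt_sq hc, ← Real.sqrt_mul (by positivity)]
  refine Real.sqrt_le_sqrt ?_
  calc ∑ a, ∑ i, M a i ^ 2 ≤ ∑ _a : m, ∑ _i : n, c ^ 2 := by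
        refine Finset.sum_le_sum fun a _ => Finset.sum_le_sum fun i _ => ?_
        exact sq_le_sq' (abs_le.1 (h a i)).1 (abs_le.1 (h a i)).2
    _ = _ := by simp [mul_assoc]

end FrobeniusBounds

end Matrix

theorem norm_toEuc_le_of_abs_le {l : ℕ} {w : Fin l → ℝ} {c : ℝ} (hc : 0 ≤ c)
    (h : ∀ i, |w i| ≤ c) : ‖toEuc w‖ ≤ √l * c := by
  rw [EuclideanSpace.norm_eq, ← Real.sqrt_sq hc, ← Real.sqrt_mul (by positivity)]
  refine Real.sqrt_le_sqrt ?_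
  calc ∑ i, ‖(toEuc w) i‖ ^ 2 ≤ ∑ _i : Fin l, c ^ 2 := by
        refine Finset.sum_le_sum fun i _ => ?_
        rw [Real.norm_eq_abs, sq_abs]
        exact sq_le_sq' (abs_le.1 (h i)).1 (abs_le.1 (h i)).2
    _ = l * c ^ 2 := by simp

theorem norm_toEuc_mul_mulVec_le {k l n : ℕ} (X : Matrix (Fin k) (Fin l) ℝ)
    (B : Matrix (Fin l) (Fin n) ℝ) (v : Fin n → ℝ) :
    ‖toEuc ((X * B) *ᵥ v)‖ ≤ ‖X‖ * ‖B‖ * ‖toEuc v‖ :=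
  ((X * B).l2_opNorm_mulVec (toEuc v)).trans (by gcongr; exact X.l2_opNorm_mul B)

theorem norm_toEuc_mul_mulVec_sub_le {k l n : ℕ} (X X' : Matrix (Fin k) (Fin l) ℝ)
    (B B' : Matrix (Fin l) (Fin n) ℝ) (v v' : Fin n → ℝ) :
    ‖toEuc ((X' * B') *ᵥ v') - toEuc ((X * B) *ᵥ v)‖ ≤
      ‖X' - X‖ * ‖B'‖ * ‖toEuc v'‖ + ‖X‖ * ‖B' - B‖ * ‖toEuc v'‖ +
        ‖X‖ * ‖B‖ * ‖toEuc (v' - v)‖ := by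
  have hdecomp : toEuc ((X' * B') *ᵥ v') - toEuc ((X * B) *ᵥ v) =
      toEuc (((X' - X) * B') *ᵥ v') + toEuc ((X * (B' - B)) *ᵥ v') +
        toEuc ((X * B) *ᵥ (v' - v)) := by
    simp only [toEuc, ← map_sub, ← map_add, Matrix.sub_mul, Matrix.mul_sub, Matrix.sub_mulVec,
      Matrix.mulVec_sub]
    congr 1
    abel
  rw [hdecomp]
  exact (norm_add₃_le).trans (add_le_add_three (norm_toEuc_mul_mulVec_le _ _ _)
    (norm_toEuc_mul_mulVec_le _ _ _) (norm_toEuc_mul_mulVec_le _ _ _))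

theorem abs_inv_one_add_sq_sub_inv_one_add_sq_le (a b : ℝ) :
    |(1 + a ^ 2)⁻¹ - (1 + b ^ 2)⁻¹| ≤ |a - b| := by
  have hpos : 0 < (1 + a ^ 2) * (1 + b ^ 2) := by positivity
  have hdiff : (1 + a ^ 2)⁻¹ - (1 + b ^ 2)⁻¹ = (b - a) * (a + b) / ((1 + a ^ 2) * (1 + b ^ 2)) := by
    field_simp
    ring
  have hsum : |a + b| ≤ (1 + a ^ 2) * (1 + b ^ 2) := by
    rw [abs_le]
    constructor <;> nlinarith [sq_nonneg (a + 1), sq_nonneg (b + 1), sq_nonneg (a - 1),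
      sq_nonneg (b - 1), sq_nonneg (a * b)]
  rw [hdiff, abs_div, abs_of_pos hpos, div_le_iff₀ hpos, abs_mul, abs_sub_comm]
  exact mul_le_mul_of_nonneg_left hsum (abs_nonneg _)

theorem abs_inv_one_add_norm_sq_sub_le {E : Type*} [SeminormedAddCommGroup E] (u v : E) :
    |(1 + ‖u‖ ^ 2)⁻¹ - (1 + ‖v‖ ^ 2)⁻¹| ≤ ‖u - v‖ :=
  (abs_inv_one_add_sq_sub_inv_one_add_sq_le _ _).trans (abs_norm_sub_norm_le u v)

section RBF

variable {m N ℓ : ℕ}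

theorem Xmat_sub (x x' : Fin ℓ → EuclideanSpace ℝ (Fin N)) : Xmat x' - Xmat x = Xmat (x' - x) :=
  rfl

theorem norm_Xmat_le {x : Fin ℓ → EuclideanSpace ℝ (Fin N)} {c : ℝ} (hc : 0 ≤ c)
    (h : ∀ i, ‖x i‖ ≤ c) : ‖Xmat x‖ ≤ √ℓ * c := by
  refine (Matrix.l2_opNorm_le_of_sum_sq_col_le hc fun i => ?_).trans_eq (by simp)
  have hcol : ∑ a, Xmat x a i ^ 2 = ‖x i‖ ^ 2 := by
    simp [EuclideanSpace.norm_sq_eq, Xmat]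
  rw [hcol]
  exact pow_le_pow_left₀ (norm_nonneg _) (h i) 2

theorem norm_Rmat_sub_le {y y' : Fin ℓ → EuclideanSpace ℝ (Fin m)} {ε : ℝ} (hε : 0 ≤ ε)
    (h : ∀ i, ‖y' i - y i‖ ≤ ε) : ‖Rmat y' - Rmat y‖ ≤ ℓ * (2 * ε) := by
  refine (Matrix.l2_opNorm_le_of_abs_le (c := 2 * ε) (by positivity) fun a i => ?_).trans_eq
    (by simp [Real.sqrt_mul_self])
  calc |(Rmat y' - Rmat y) a i| ≤ ‖(y' a - y' i) - (y a - y i)‖ :=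
        abs_inv_one_add_norm_sq_sub_le _ _
    _ = ‖(y' a - y a) - (y' i - y i)‖ := by congr 1; abel
    _ ≤ ε + ε := (norm_sub_le _ _).trans (add_le_add (h a) (h i))
    _ = 2 * ε := by ring

theorem norm_toEuc_Phivec_le (y : Fin ℓ → EuclideanSpace ℝ (Fin m))
    (z : EuclideanSpace ℝ (Fin m)) : ‖toEuc (Phivec y z)‖ ≤ √ℓ := by
  refine (norm_toEuc_le_of_abs_le zero_le_one fun i => ?_).trans_eq (mul_one _)
  rw [Phivec, abs_of_pos (by positivity)]
  exact inv_le_one_of_one_le₀ (le_add_of_nonneg_right (by positivity))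

theorem norm_toEuc_Phivec_sub_le {y y' : Fin ℓ → EuclideanSpace ℝ (Fin m)} {ε : ℝ} (hε : 0 ≤ ε)
    (h : ∀ i, ‖y' i - y i‖ ≤ ε) (z : EuclideanSpace ℝ (Fin m)) :
    ‖toEuc (Phivec y' z - Phivec y z)‖ ≤ √ℓ * ε := by
  refine norm_toEuc_le_of_abs_le hε fun i => ?_
  calc |(Phivec y' z - Phivec y z) i| ≤ ‖(z - y' i) - (z - y i)‖ :=
        abs_inv_one_add_norm_sq_sub_le _ _
    _ = ‖y' i - y i‖ := by rw [sub_sub_sub_cancel_left, norm_sub_rev]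
    _ ≤ ε := h i

end RBF

theorem rbf_threshold_bounds {m ℓ j kR r : ℕ}
    (hr : ((2 : ℝ) ^ r)⁻¹ ≤
      min ((1 / 7) * (1 / 4) * (1 / (2 * (m : ℝ))) * (1 / (ℓ : ℝ) ^ 2) *
            ((2 : ℝ) ^ (2 * kR))⁻¹ * ((2 : ℝ) ^ j)⁻¹)
          ((1 / 7) * (1 / (ℓ : ℝ)) * ((2 : ℝ) ^ kR)⁻¹ * ((2 : ℝ) ^ j)⁻¹)) :
    ℓ * 2 ^ kR * ((2 : ℝ) ^ r)⁻¹ ≤ ((2 : ℝ) ^ j)⁻¹ / 7 ∧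
      ℓ ^ 2 * ((2 : ℝ) ^ kR) ^ 2 * ((2 : ℝ) ^ r)⁻¹ ≤ ((2 : ℝ) ^ j)⁻¹ / 28 := by
  set ε : ℝ := ((2 : ℝ) ^ r)⁻¹
  set K : ℝ := (2 : ℝ) ^ kR
  set J : ℝ := ((2 : ℝ) ^ j)⁻¹
  set L : ℝ := (ℓ : ℝ)
  have hK : K ≠ 0 := by positivity
  have hJ : 0 ≤ J := by positivity
  rw [pow_mul'] at hr
  -- `L / L ≤ 1` and `1 / (2m) ≤ 1` also hold at `ℓ = 0`, `m = 0`, where they are `0`.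
  constructor
  · calc L * K * ε ≤ L * K * ((1 / 7) * (1 / L) * K⁻¹ * J) := by
          gcongr
          exact hr.trans (min_le_right _ _)
      _ = L / L * (K * K⁻¹) * (J / 7) := by ring
      _ ≤ J / 7 := by
          rw [mul_inv_cancel₀ hK, mul_one]
          exact mul_le_of_le_one_left (by positivity) (div_self_le_one L)
  · have hm : 1 / (2 * (m : ℝ)) ≤ 1 := by
      rw [one_div]
      exact_mod_cast Nat.cast_inv_le_one (2 * m)
    calc L ^ 2 * K ^ 2 * ε
        ≤ L ^ 2 * K ^ 2 *
            ((1 / 7) * (1 / 4) * (1 / (2 * (m : ℝ))) * (1 / L ^ 2) * (K ^ 2)⁻¹ * J) := by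
          gcongr
          exact hr.trans (min_le_left _ _)
      _ = L ^ 2 / L ^ 2 * (K ^ 2 * (K ^ 2)⁻¹) * (1 / (2 * (m : ℝ))) * (J / 28) := by ring
      _ ≤ J / 28 := by
          rw [mul_inv_cancel₀ (pow_ne_zero 2 hK), mul_one]
          refine mul_le_of_le_one_left (by positivity) ?_
          exact mul_le_one₀ (div_self_le_one _) (by positivity) hm

theorem stmt_9_general (m N ℓ j kR r : ℕ)
    (y y' : Fin ℓ → EuclideanSpace ℝ (Fin m))
    (x x' : Fin ℓ → EuclideanSpace ℝ (Fin N))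
    (hx1 : ∀ i, ‖x i‖ ≤ 1)
    (hR : IsUnit (Rmat y).det)
    (hRnorm : matOpNorm (Rmat y)⁻¹ ≤ (2 : ℝ) ^ kR)
    (hxr : ∀ i, ‖x' i - x i‖ ≤ ((2 : ℝ) ^ r)⁻¹)
    (hyr : ∀ i, ‖y' i - y i‖ ≤ ((2 : ℝ) ^ r)⁻¹)
    (hr : ((2 : ℝ) ^ r)⁻¹ ≤
      min ((1 / 7) * (1 / 4) * (1 / (2 * (m : ℝ))) * (1 / (ℓ : ℝ) ^ 2) *
            ((2 : ℝ) ^ (2 * kR))⁻¹ * ((2 : ℝ) ^ j)⁻¹)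
          ((1 / 7) * (1 / (ℓ : ℝ)) * ((2 : ℝ) ^ kR)⁻¹ * ((2 : ℝ) ^ j)⁻¹)) :
    IsUnit (Rmat y').det ∧
    ∀ z : EuclideanSpace ℝ (Fin m),
      ‖toEuc ((Xmat x' * (Rmat y')⁻¹).mulVec (Phivec y' z)) -
        toEuc ((Xmat x * (Rmat y)⁻¹).mulVec (Phivec y z))‖ ≤ ((2 : ℝ) ^ j)⁻¹ := by
  obtain ⟨hLK, hLK2⟩ := rbf_threshold_bounds hr
  set ε : ℝ := ((2 : ℝ) ^ r)⁻¹
  set K : ℝ := (2 : ℝ) ^ kR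
  set J : ℝ := ((2 : ℝ) ^ j)⁻¹
  have hε : 0 ≤ ε := by positivity
  have hJ : J ≤ 1 := inv_le_one_of_one_le₀ (one_le_pow₀ one_le_two)
  have hRinv : ‖(Rmat y)⁻¹‖ ≤ K := hRnorm
  obtain ⟨hR', hR'inv, hRdiff⟩ := Matrix.isUnit_det_and_inv_bounds_of_norm_sub_le (δ := 2 / 7)
    hR hRinv (norm_Rmat_sub_le hε hyr) (by linarith) (by norm_num)
  refine ⟨hR', fun z => ?_⟩
  have hX := norm_Xmat_le zero_le_one hx1
  have hXsub : ‖Xmat x' - Xmat x‖ ≤ √ℓ * ε := Xmat_sub x x' ▸ norm_Xmat_le hε hxr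
  have hΦ := norm_toEuc_Phivec_le y' z
  have hΦsub := norm_toEuc_Phivec_sub_le hε hyr z
  calc _ ≤ _ := norm_toEuc_mul_mulVec_sub_le _ _ _ _ _ _
    _ ≤ √ℓ * ε * ((1 - 2 / 7)⁻¹ * K) * √ℓ +
          √ℓ * 1 * ((1 - 2 / 7)⁻¹ * K * (ℓ * (2 * ε)) * K) * √ℓ + √ℓ * 1 * K * (√ℓ * ε) := by
          gcongr
    _ = 12 / 5 * (ℓ * K * ε) + 14 / 5 * (ℓ ^ 2 * K ^ 2 * ε) := by
          have hℓ : √(ℓ : ℝ) * √ℓ = ℓ := Real.mul_self_sqrt (Nat.cast_nonneg ℓ)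
          linear_combination (12 / 5 * K * ε + 14 / 5 * ℓ * K ^ 2 * ε) * hℓ
    _ ≤ J := by linarith [show 0 ≤ J by positivity]

/-- stability of the RBF interpolant `y ↦ X R⁻¹ Φ(y)` under perturbation
of the data by `2⁻ʳ`, with `2⁻ʳ` below the explicit threshold: the perturbed kernel
matrix is invertible and the two interpolants are uniformly `2⁻ʲ`-close. -/
theorem stmt_9 (m N ℓ j kR r : ℕ) (hm : 2 ≤ m) (hℓ : 1 ≤ ℓ) (hj : 1 ≤ j)
    (y y' : Fin ℓ → EuclideanSpace ℝ (Fin m))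
    (x x' : Fin ℓ → EuclideanSpace ℝ (Fin N))
    (hy : Function.Injective y) (hy1 : ∀ i, ‖y i‖ ≤ 1) (hx1 : ∀ i, ‖x i‖ ≤ 1)
    (hR : IsUnit (Rmat y).det)
    (hRnorm : matOpNorm (Rmat y)⁻¹ ≤ (2 : ℝ) ^ kR)
    (hy' : Function.Injective y')
    (hxr : ∀ i, ‖x' i - x i‖ ≤ ((2 : ℝ) ^ r)⁻¹)
    (hyr : ∀ i, ‖y' i - y i‖ ≤ ((2 : ℝ) ^ r)⁻¹)
    (hr : ((2 : ℝ) ^ r)⁻¹ ≤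
      min ((1 / 7) * (1 / 4) * (1 / (2 * (m : ℝ))) * (1 / (ℓ : ℝ) ^ 2) *
            ((2 : ℝ) ^ (2 * kR))⁻¹ * ((2 : ℝ) ^ j)⁻¹)
          ((1 / 7) * (1 / (ℓ : ℝ)) * ((2 : ℝ) ^ kR)⁻¹ * ((2 : ℝ) ^ j)⁻¹)) :
    IsUnit (Rmat y').det ∧
    ∀ z : EuclideanSpace ℝ (Fin m),
      ‖toEuc ((Xmat x' * (Rmat y')⁻¹).mulVec (Phivec y' z)) -
        toEuc ((Xmat x * (Rmat y)⁻¹).mulVec (Phivec y z))‖ ≤ ((2 : ℝ) ^ j)⁻¹ :=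
  stmt_9_general m N ℓ j kR r y y' x x' hx1 hR hRnorm hxr hyr hr
end

section
/- Let A and Ã be real m×N matrices, 0 < β_min ≤ β_max, and suppose β_min²·I ≼ A Aᵀ ≼ β_max²·I (i.e. the spectrum of A Aᵀ lies in [β_min², β_max²]; in particular A Aᵀ is invertible), and suppose Ã Ãᵀ is invertible. Let α = min(1, β_min) and let j ≥ 1. If ‖Ã − A‖_op ≤ (1/2)·(1/4)·(1 + β_max)^{-2}·α⁴·2^{-j}, then ‖Ãᵀ (Ã Ãᵀ)⁻¹ − Aᵀ (A Aᵀ)⁻¹‖_op ≤ 2^{-j}. -/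
/-
Write `G = (BBᵀ)⁻¹` and `A† = Aᵀ(AAᵀ)⁻¹`. The identity
`Bᵀ G - A† = (B - A)ᵀ G + A† (AAᵀ - BBᵀ) G` reduces the claim to bounds on `‖G‖` and `‖A†‖`.
The lower spectral bound says that `x ↦ ⟪x, AAᵀ x⟫` is coercive with constant `βmin²`, whence
`‖A†‖² = ‖(AAᵀ)⁻¹‖ ≤ βmin⁻²`. Since `‖BBᵀ - AAᵀ‖ ≤ ‖B - A‖ (2‖A‖ + ‖B - A‖)` and `‖A‖ ≤ βmax`,
`BBᵀ` is still coercive with constant `βmin² / 2`, so it is invertible with `‖G‖ ≤ 2 βmin⁻²`.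
The smallness of `‖B - A‖` then makes each of the two terms at most `2⁻ʲ / 4`.
-/

open scoped ENNReal
open Matrix

open scoped Matrix.Norms.L2Operator RealInnerProductSpace

lemma matOpNorm_eq_l2_opNorm {k l : ℕ} (M : Matrix (Fin k) (Fin l) ℝ) : matOpNorm M = ‖M‖ := rfl

namespace Matrix

variable {m n : Type*} [Fintype m] [Fintype n]

lemma l2_opNorm_transpose [DecidableEq m] [DecidableEq n] (M : Matrix m n ℝ) : ‖Mᵀ‖ = ‖M‖ := by
  simpa [conjTranspose_eq_transpose_of_trivial] using l2_opNorm_conjTranspose M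

lemma real_inner_toEuclideanLin_mul_transpose_self [DecidableEq m] [DecidableEq n]
    (M : Matrix m n ℝ) (x : EuclideanSpace ℝ m) :
    ⟪x, toEuclideanLin (M * Mᵀ) x⟫ = ‖toEuclideanLin Mᵀ x‖ ^ 2 := by
  rw [toLpLin_mul_same, LinearMap.comp_apply, ← real_inner_self_eq_norm_sq,
    ← conjTranspose_eq_transpose_of_trivial, toEuclideanLin_conjTranspose_eq_adjoint,
    LinearMap.adjoint_inner_left]

lemma real_inner_toEuclideanLin_smul_one [DecidableEq n] (c : ℝ) (x : EuclideanSpace ℝ n) :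
    ⟪x, toEuclideanLin (c • 1 : Matrix n n ℝ) x⟫ = c * ‖x‖ ^ 2 := by
  simp [inner_smul_right]

lemma PosSemidef.real_inner_toEuclideanLin_le [DecidableEq n] {S T : Matrix n n ℝ}
    (h : (S - T).PosSemidef) (x : EuclideanSpace ℝ n) :
    ⟪x, toEuclideanLin T x⟫ ≤ ⟪x, toEuclideanLin S x⟫ := by
  have hpos := (isPositive_toEuclideanLin_iff.mpr h).2 x
  simp only [map_sub, LinearMap.sub_apply, inner_sub_left, RCLike.re_to_real] at hpos
  rw [real_inner_comm x, real_inner_comm x] at hpos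
  linarith

lemma abs_real_inner_toEuclideanLin_le [DecidableEq n] (S : Matrix n n ℝ) (x : EuclideanSpace ℝ n) :
    |⟪x, toEuclideanLin S x⟫| ≤ ‖S‖ * ‖x‖ ^ 2 := by
  calc |⟪x, toEuclideanLin S x⟫| ≤ ‖x‖ * ‖toEuclideanLin S x‖ := abs_real_inner_le_norm _ _
    _ ≤ ‖x‖ * (‖S‖ * ‖x‖) := by gcongr; exact l2_opNorm_mulVec S x
    _ = ‖S‖ * ‖x‖ ^ 2 := by ring

lemma l2_opNorm_le_of_posSemidef [DecidableEq m] [DecidableEq n] {M : Matrix m n ℝ} {b : ℝ}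
    (hb : 0 ≤ b) (h : (b ^ 2 • 1 - M * Mᵀ).PosSemidef) : ‖M‖ ≤ b := by
  rw [← l2_opNorm_transpose]
  refine ContinuousLinearMap.opNorm_le_bound _ hb fun x => ?_
  have hx := h.real_inner_toEuclideanLin_le x
  rw [real_inner_toEuclideanLin_mul_transpose_self, real_inner_toEuclideanLin_smul_one,
    ← mul_pow] at hx
  exact (pow_le_pow_iff_left₀ (norm_nonneg _) (by positivity) two_ne_zero).mp hx

def IsCoerciveWith [DecidableEq n] (c : ℝ) (S : Matrix n n ℝ) : Prop :=
  ∀ x : EuclideanSpace ℝ n, c * ‖x‖ ^ 2 ≤ ⟪x, toEuclideanLin S x⟫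

section IsCoerciveWith

variable [DecidableEq n] {S T : Matrix n n ℝ} {c d : ℝ}

lemma PosSemidef.isCoerciveWith (h : (S - c • 1).PosSemidef) : IsCoerciveWith c S := fun x => by
  simpa only [real_inner_toEuclideanLin_smul_one] using h.real_inner_toEuclideanLin_le x

lemma IsCoerciveWith.of_l2_opNorm_sub_le (hS : IsCoerciveWith c S) (hT : ‖T - S‖ ≤ d) :
    IsCoerciveWith (c - d) T := fun x => by
  have hdiff := abs_le.mp (abs_real_inner_toEuclideanLin_le (T - S) x)
  rw [map_sub, LinearMap.sub_apply, inner_sub_right] at hdiff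
  nlinarith [hS x, sq_nonneg ‖x‖]

lemma IsCoerciveWith.isUnit_det (hS : IsCoerciveWith c S) (hc : 0 < c) : IsUnit S.det := by
  rw [← isUnit_iff_isUnit_det, ← mulVec_injective_iff_isUnit]
  have hker : Function.Injective (toEuclideanLin S) := by
    refine (injective_iff_map_eq_zero _).mpr fun x hx => ?_
    have hx' := hS x
    rw [hx, inner_zero_right] at hx'
    have hx0 : ‖x‖ ^ 2 ≤ 0 := by nlinarith [sq_nonneg ‖x‖]
    simpa using hx0
  exact fun v w hvw => congrArg WithLp.ofLp (hker (congrArg (WithLp.toLp 2) hvw))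

lemma IsCoerciveWith.l2_opNorm_nonsing_inv_le (hS : IsCoerciveWith c S) (hc : 0 < c) :
    ‖S⁻¹‖ ≤ c⁻¹ := by
  refine ContinuousLinearMap.opNorm_le_bound _ (inv_nonneg.2 hc.le) fun y => ?_
  change ‖toEuclideanLin S⁻¹ y‖ ≤ c⁻¹ * ‖y‖
  set x := toEuclideanLin S⁻¹ y
  have hSx : toEuclideanLin S x = y := by
    rw [← LinearMap.comp_apply, ← toLpLin_mul_same, mul_nonsing_inv _ (hS.isUnit_det hc),
      toLpLin_one, LinearMap.id_apply]
  have hxy : c * ‖x‖ ^ 2 ≤ ‖x‖ * ‖y‖ := hSx ▸ (hS x).trans (real_inner_le_norm x _)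
  rw [inv_mul_eq_div, le_div_iff₀' hc]
  rcases (norm_nonneg x).eq_or_lt with h0 | h0
  · rw [← h0, mul_zero]; exact norm_nonneg y
  · nlinarith

end IsCoerciveWith

lemma l2_opNorm_transpose_mul_inv_mul_self [DecidableEq m] [DecidableEq n] (A : Matrix m n ℝ)
    (hA : IsUnit (A * Aᵀ).det) :
    ‖Aᵀ * (A * Aᵀ)⁻¹‖ * ‖Aᵀ * (A * Aᵀ)⁻¹‖ = ‖(A * Aᵀ)⁻¹‖ := by
  have hsymm : (A * Aᵀ)⁻¹ᵀ = (A * Aᵀ)⁻¹ := by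
    rw [transpose_nonsing_inv, transpose_mul, transpose_transpose]
  rw [← l2_opNorm_conjTranspose_mul_self, conjTranspose_eq_transpose_of_trivial, transpose_mul,
    transpose_transpose, hsymm, ← Matrix.mul_assoc, Matrix.mul_assoc _ A,
    nonsing_inv_mul _ hA, Matrix.one_mul]

lemma transpose_mul_inv_sub_transpose_mul_inv {R : Type*} [CommRing R] [DecidableEq m]
    {A B : Matrix m n R} (hA : IsUnit (A * Aᵀ).det) (hB : IsUnit (B * Bᵀ).det) :
    Bᵀ * (B * Bᵀ)⁻¹ - Aᵀ * (A * Aᵀ)⁻¹ =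
      (B - A)ᵀ * (B * Bᵀ)⁻¹ + Aᵀ * (A * Aᵀ)⁻¹ * ((A * Aᵀ - B * Bᵀ) * (B * Bᵀ)⁻¹) := by
  have hcancel : Aᵀ * (A * Aᵀ)⁻¹ * (A * Aᵀ * (B * Bᵀ)⁻¹) = Aᵀ * (B * Bᵀ)⁻¹ := by
    rw [← Matrix.mul_assoc, Matrix.mul_assoc Aᵀ, nonsing_inv_mul _ hA, Matrix.mul_one]
  rw [Matrix.sub_mul (A * Aᵀ), mul_nonsing_inv _ hB, Matrix.mul_sub, Matrix.mul_one, hcancel,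
    transpose_sub, Matrix.sub_mul]
  abel

lemma l2_opNorm_mul_transpose_sub_le [DecidableEq m] [DecidableEq n] (A B : Matrix m n ℝ) :
    ‖B * Bᵀ - A * Aᵀ‖ ≤ ‖B - A‖ * (2 * ‖A‖ + ‖B - A‖) := by
  have hexp : B * Bᵀ - A * Aᵀ = A * (B - A)ᵀ + (B - A) * Aᵀ + (B - A) * (B - A)ᵀ := by
    simp only [transpose_sub, Matrix.mul_sub, Matrix.sub_mul]; abel
  calc ‖B * Bᵀ - A * Aᵀ‖
      ≤ ‖A‖ * ‖(B - A)ᵀ‖ + ‖B - A‖ * ‖Aᵀ‖ + ‖B - A‖ * ‖(B - A)ᵀ‖ := by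
        rw [hexp]
        refine (norm_add₃_le).trans (add_le_add_three ?_ ?_ ?_) <;> exact l2_opNorm_mul _ _
    _ = ‖B - A‖ * (2 * ‖A‖ + ‖B - A‖) := by simp only [l2_opNorm_transpose]; ring

theorem l2_opNorm_transpose_mul_inv_sub_le [DecidableEq m] [DecidableEq n] {A B : Matrix m n ℝ}
    {b : ℝ} (hb : 0 < b) (hA : IsCoerciveWith (b ^ 2) (A * Aᵀ))
    (hδ : ‖B * Bᵀ - A * Aᵀ‖ ≤ b ^ 2 / 2) :
    ‖Bᵀ * (B * Bᵀ)⁻¹ - Aᵀ * (A * Aᵀ)⁻¹‖ ≤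
      (‖B - A‖ + b⁻¹ * ‖B * Bᵀ - A * Aᵀ‖) * (b ^ 2 / 2)⁻¹ := by
  have hB : IsCoerciveWith (b ^ 2 / 2) (B * Bᵀ) := by
    simpa only [sub_half] using hA.of_l2_opNorm_sub_le hδ
  have hAA := hA.isUnit_det (by positivity)
  have hpinvA : ‖Aᵀ * (A * Aᵀ)⁻¹‖ ≤ b⁻¹ := by
    have hsq := l2_opNorm_transpose_mul_inv_mul_self A hAA
    have hinv := hA.l2_opNorm_nonsing_inv_le (by positivity)
    rw [← hsq, ← inv_pow, sq] at hinv
    exact (mul_self_le_mul_self_iff (norm_nonneg _) (inv_nonneg.2 hb.le)).mpr hinv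
  have hinvB := hB.l2_opNorm_nonsing_inv_le (by positivity)
  rw [transpose_mul_inv_sub_transpose_mul_inv hAA (hB.isUnit_det (by positivity))]
  calc _ ≤ ‖(B - A)ᵀ‖ * ‖(B * Bᵀ)⁻¹‖ +
        ‖Aᵀ * (A * Aᵀ)⁻¹‖ * (‖A * Aᵀ - B * Bᵀ‖ * ‖(B * Bᵀ)⁻¹‖) := by
        refine (norm_add_le _ _).trans (add_le_add (l2_opNorm_mul _ _) ?_)
        exact (l2_opNorm_mul _ _).trans (by gcongr; exact l2_opNorm_mul _ _)
    _ ≤ ‖B - A‖ * (b ^ 2 / 2)⁻¹ + b⁻¹ * (‖B * Bᵀ - A * Aᵀ‖ * (b ^ 2 / 2)⁻¹) := by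
        rw [l2_opNorm_transpose, norm_sub_rev (A * Aᵀ)]
        gcongr
    _ = _ := by ring

end Matrix

lemma min_one_pow_le_pow {b : ℝ} (hb : 0 ≤ b) {k n : ℕ} (hkn : k ≤ n) : min 1 b ^ n ≤ b ^ k :=
  (pow_le_pow_of_le_one (le_min zero_le_one hb) (min_le_left _ _) hkn).trans
    (pow_le_pow_left₀ (le_min zero_le_one hb) (min_le_right _ _) k)

theorem stmt_11_general (m N : ℕ) (A B : Matrix (Fin m) (Fin N) ℝ)
    (βmin βmax : ℝ) (hβmin : 0 < βmin) (hββ : βmin ≤ βmax)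
    (hlow : (A * Aᵀ - (βmin ^ 2) • (1 : Matrix (Fin m) (Fin m) ℝ)).PosSemidef)
    (hup : ((βmax ^ 2) • (1 : Matrix (Fin m) (Fin m) ℝ) - A * Aᵀ).PosSemidef)
    (α : ℝ) (hα : α = min 1 βmin) (j : ℕ)
    (hclose : matOpNorm (B - A) ≤
      (1 / 2) * (1 / 4) * ((1 + βmax) ^ 2)⁻¹ * α ^ 4 * ((2 : ℝ) ^ j)⁻¹) :
    matOpNorm (Bᵀ * (B * Bᵀ)⁻¹ - Aᵀ * (A * Aᵀ)⁻¹) ≤ ((2 : ℝ) ^ j)⁻¹ := by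
  rw [matOpNorm_eq_l2_opNorm] at hclose ⊢
  set t : ℝ := ((2 : ℝ) ^ j)⁻¹
  have ht0 : 0 < t := inv_pos.2 (pow_pos two_pos j)
  have ht : t ≤ 1 := inv_le_one_of_one_le₀ (one_le_pow₀ one_le_two)
  have hα2 : α ^ 4 ≤ βmin ^ 2 := hα ▸ min_one_pow_le_pow hβmin.le (by norm_num)
  have hα3 : α ^ 4 ≤ βmin ^ 3 := hα ▸ min_one_pow_le_pow hβmin.le (by norm_num)
  have hαt : α ^ 4 * t ≤ α ^ 4 := mul_le_of_le_one_right (by positivity) ht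
  have hε : ‖B - A‖ * (1 + βmax) ^ 2 ≤ α ^ 4 * t / 8 := by
    rw [← le_div_iff₀ (pow_pos (by linarith) 2)]
    exact hclose.trans_eq (by field_simp; ring)
  have hε' : ‖B - A‖ ≤ ‖B - A‖ * (1 + βmax) ^ 2 :=
    le_mul_of_one_le_right (norm_nonneg _) (by nlinarith)
  have hA : ‖A‖ ≤ βmax := l2_opNorm_le_of_posSemidef (hβmin.le.trans hββ) hup
  have hδ : ‖B * Bᵀ - A * Aᵀ‖ ≤ α ^ 4 * t / 8 := by
    refine (l2_opNorm_mul_transpose_sub_le A B).trans (le_trans ?_ hε)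
    have hε1 : ‖B - A‖ ≤ 1 := by nlinarith
    gcongr
    nlinarith
  refine (l2_opNorm_transpose_mul_inv_sub_le hβmin hlow.isCoerciveWith (by nlinarith)).trans ?_
  have hδ' : βmin⁻¹ * ‖B * Bᵀ - A * Aᵀ‖ ≤ βmin ^ 2 * t / 8 := by
    rw [inv_mul_le_iff₀ hβmin]
    nlinarith [mul_le_mul_of_nonneg_right hα3 ht0.le]
  rw [mul_inv_le_iff₀ (by positivity)]
  nlinarith [mul_le_mul_of_nonneg_right hα2 ht0.le]

/-- a quantitative perturbation bound for the pseudoinverse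
`A† = Aᵀ(AAᵀ)⁻¹`: if the spectrum of `AAᵀ` lies in `[β_min², β_max²]`, `B Bᵀ` is
invertible and `‖B - A‖ ≤ (1/2)(1/4)(1+β_max)⁻² α⁴ 2⁻ʲ` with `α = min 1 β_min`,
then `‖Bᵀ(BBᵀ)⁻¹ - Aᵀ(AAᵀ)⁻¹‖ ≤ 2⁻ʲ` (here `B` plays the role of `Ã`). -/
theorem stmt_11 (m N : ℕ) (A B : Matrix (Fin m) (Fin N) ℝ)
    (βmin βmax : ℝ) (hβmin : 0 < βmin) (hββ : βmin ≤ βmax)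
    (hlow : (A * Aᵀ - (βmin ^ 2) • (1 : Matrix (Fin m) (Fin m) ℝ)).PosSemidef)
    (hup : ((βmax ^ 2) • (1 : Matrix (Fin m) (Fin m) ℝ) - A * Aᵀ).PosSemidef)
    (hAAT : IsUnit (A * Aᵀ).det)
    (hBBT : IsUnit (B * Bᵀ).det)
    (α : ℝ) (hα : α = min 1 βmin) (j : ℕ) (hj : 1 ≤ j)
    (hclose : matOpNorm (B - A) ≤
      (1 / 2) * (1 / 4) * ((1 + βmax) ^ 2)⁻¹ * α ^ 4 * ((2 : ℝ) ^ j)⁻¹) :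
    matOpNorm (Bᵀ * (B * Bᵀ)⁻¹ - Aᵀ * (A * Aᵀ)⁻¹) ≤ ((2 : ℝ) ^ j)⁻¹ :=
  stmt_11_general m N A B βmin βmax hβmin hββ hlow hup α hα j hclose
end

section
/- Let A : ℝ^N → ℝ^m be a nonzero linear map, ε₁ > 0, v ∈ ker A with ‖v‖ = 4ε₁, e ∈ (ker A)ᗮ with ‖e‖ = 1, θ = min(1, ‖A‖_op^{-1}), n ∈ ℕ, and w = θ·4^{-n}·e. Let δ ∈ (0, ε₁) and ε ≤ 2ε₁ − δ. Suppose f : ℝ^m → ℝ^N is differentiable and satisfies ‖f(0)‖ ≤ ε and ‖f(A(v+w)) − (v+w)‖ ≤ ε. Then for every K ≥ 0 such that ‖Df(c)‖_op ≤ K for all c in the segment joining 0 and A(v+w), one has K > 2δ·4^n. In other words, any map reconstructing both data points to accuracy ε ≤ 2ε₁ − δ has, somewhere on that segment, derivative of operator norm exceeding 2δ·4^n. -/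
open scoped RealInnerProductSpace

/-!
Since `v ∈ ker A`, the two data points `0` and `v + w` have measurements `0` and `A w`, which are
at most `4⁻ⁿ` apart, while `v + w` has norm strictly greater than `‖v‖ = 4ε₁` because `w ≠ 0`
is orthogonal to `v`. A map reconstructing both points to accuracy `ε` must therefore move by
more than `4ε₁ - 2ε ≥ 2δ` over a segment of length at most `4⁻ⁿ`, and the mean value
inequality turns this into the lower bound `2δ·4ⁿ` on its derivative.
-/

lemma min_one_inv_mul_le_one_s14 {a : ℝ} (ha : 0 ≤ a) : min 1 a⁻¹ * a ≤ 1 := by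
  rcases ha.eq_or_lt with rfl | ha
  · simp
  · calc min 1 a⁻¹ * a ≤ a⁻¹ * a := by gcongr; exact min_le_right _ _
      _ = 1 := inv_mul_cancel₀ ha.ne'

lemma norm_apply_min_one_inv_opNorm_mul_smul_le {E F : Type*} [NormedAddCommGroup E]
    [NormedSpace ℝ E] [NormedAddCommGroup F] [NormedSpace ℝ F] (T : E →L[ℝ] F) {r : ℝ}
    (hr : 0 ≤ r) (x : E) : ‖T ((min 1 ‖T‖⁻¹ * r) • x)‖ ≤ r * ‖x‖ := by
  have hθ : 0 ≤ min 1 ‖T‖⁻¹ := le_min zero_le_one (inv_nonneg.2 (norm_nonneg T))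
  rw [map_smul, norm_smul, Real.norm_of_nonneg (mul_nonneg hθ hr)]
  calc min 1 ‖T‖⁻¹ * r * ‖T x‖ ≤ min 1 ‖T‖⁻¹ * r * (‖T‖ * ‖x‖) := by gcongr; exact T.le_opNorm x
    _ = (min 1 ‖T‖⁻¹ * ‖T‖) * (r * ‖x‖) := by ring
    _ ≤ r * ‖x‖ := mul_le_of_le_one_left (by positivity) (min_one_inv_mul_le_one_s14 (norm_nonneg T))

lemma norm_lt_norm_add_of_inner_eq_zero {E : Type*} [NormedAddCommGroup E]
    [InnerProductSpace ℝ E] {v w : E} (h : ⟪v, w⟫ = 0) (hw : w ≠ 0) : ‖v‖ < ‖v + w‖ := by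
  have hsq : ‖v‖ ^ 2 < ‖v + w‖ ^ 2 := by
    rw [norm_add_sq_real, h]
    nlinarith [norm_pos_iff.2 hw]
  exact lt_of_pow_lt_pow_left₀ 2 (norm_nonneg _) hsq

lemma norm_le_of_norm_fderiv_le_on_segment {E F : Type*} [NormedAddCommGroup E]
    [NormedSpace ℝ E] [NormedAddCommGroup F] [NormedSpace ℝ F] {f : E → F}
    (hf : Differentiable ℝ f) {x : E} {y : F} {ε K : ℝ} (hf0 : ‖f 0‖ ≤ ε)
    (hfx : ‖f x - y‖ ≤ ε) (hK : ∀ c ∈ segment ℝ 0 x, ‖fderiv ℝ f c‖ ≤ K) :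
    ‖y‖ ≤ 2 * ε + K * ‖x‖ := by
  have hmv : ‖f x - f 0‖ ≤ K * ‖x‖ := by
    simpa using (convex_segment (0 : E) x).norm_image_sub_le_of_norm_fderiv_le
      (fun c _ => hf.differentiableAt) hK (left_mem_segment ℝ _ _) (right_mem_segment ℝ _ _)
  calc ‖y‖ = ‖(f x - f 0) + f 0 - (f x - y)‖ := by congr 1; abel
    _ ≤ ‖f x - f 0‖ + ‖f 0‖ + ‖f x - y‖ := norm_sub_le_of_le (norm_add_le _ _) le_rfl
    _ ≤ 2 * ε + K * ‖x‖ := by linarith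

theorem stmt_14_general (m N : ℕ)
    (A : EuclideanSpace ℝ (Fin N) →ₗ[ℝ] EuclideanSpace ℝ (Fin m)) (hA : A ≠ 0)
    (ε₁ : ℝ)
    (v : EuclideanSpace ℝ (Fin N)) (hv : v ∈ LinearMap.ker A) (hvnorm : ‖v‖ = 4 * ε₁)
    (e : EuclideanSpace ℝ (Fin N)) (he : e ∈ (LinearMap.ker A)ᗮ) (henorm : ‖e‖ = 1)
    (θ : ℝ) (hθ : θ = min 1 ‖LinearMap.toContinuousLinearMap A‖⁻¹)
    (n : ℕ) (w : EuclideanSpace ℝ (Fin N)) (hw : w = (θ * (4 : ℝ)⁻¹ ^ n) • e)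
    (δ ε : ℝ) (hε : ε ≤ 2 * ε₁ - δ)
    (f : EuclideanSpace ℝ (Fin m) → EuclideanSpace ℝ (Fin N)) (hf : Differentiable ℝ f)
    (hf0 : ‖f 0‖ ≤ ε) (hfw : ‖f (A (v + w)) - (v + w)‖ ≤ ε) :
    ∀ K : ℝ, 0 ≤ K →
      (∀ c ∈ segment ℝ (0 : EuclideanSpace ℝ (Fin m)) (A (v + w)), ‖fderiv ℝ f c‖ ≤ K) →
      2 * δ * 4 ^ n < K := by
  intro K hK hKseg
  set T := LinearMap.toContinuousLinearMap A
  have hθ0 : 0 < θ := hθ ▸ lt_min one_pos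
    (inv_pos.2 (norm_pos_iff.2 ((LinearMap.toContinuousLinearMap).map_ne_zero_iff.2 hA)))
  have hAvw : ‖A (v + w)‖ ≤ (4 : ℝ)⁻¹ ^ n := by
    rw [map_add, LinearMap.mem_ker.1 hv, zero_add]
    have := norm_apply_min_one_inv_opNorm_mul_smul_le T (r := (4 : ℝ)⁻¹ ^ n) (by positivity) e
    rwa [← hθ, ← hw, henorm, mul_one, LinearMap.coe_toContinuousLinearMap'] at this
  have hvw : ‖v‖ < ‖v + w‖ := by
    refine norm_lt_norm_add_of_inner_eq_zero ?_ ?_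
    · rw [hw, inner_smul_right, (Submodule.mem_orthogonal _ e).1 he v hv, mul_zero]
    · rw [hw, smul_ne_zero_iff]
      exact ⟨by positivity, norm_ne_zero_iff.1 (henorm ▸ one_ne_zero)⟩
  have hreach := norm_le_of_norm_fderiv_le_on_segment hf hf0 hfw hKseg
  have hstep : 2 * δ < K * (4 : ℝ)⁻¹ ^ n := by linarith [mul_le_mul_of_nonneg_left hAvw hK]
  calc 2 * δ * 4 ^ n < K * (4 : ℝ)⁻¹ ^ n * 4 ^ n := by gcongr
    _ = K := by rw [mul_assoc, ← mul_pow]; norm_num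

/-- the accuracy–stability trade-off: any differentiable map `f`
reconstructing both data points `(0,0)` and `(v+w, A(v+w))` to accuracy
`ε ≤ 2ε₁ - δ` has, somewhere on the segment from `0` to `A(v+w)`, a derivative of
operator norm exceeding `2δ·4ⁿ`: every uniform bound `K` on the derivative along that
segment satisfies `K > 2δ·4ⁿ`. -/
theorem stmt_14 (m N : ℕ)
    (A : EuclideanSpace ℝ (Fin N) →ₗ[ℝ] EuclideanSpace ℝ (Fin m)) (hA : A ≠ 0)
    (ε₁ : ℝ) (hε₁ : 0 < ε₁)
    (v : EuclideanSpace ℝ (Fin N)) (hv : v ∈ LinearMap.ker A) (hvnorm : ‖v‖ = 4 * ε₁)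
    (e : EuclideanSpace ℝ (Fin N)) (he : e ∈ (LinearMap.ker A)ᗮ) (henorm : ‖e‖ = 1)
    (θ : ℝ) (hθ : θ = min 1 ‖LinearMap.toContinuousLinearMap A‖⁻¹)
    (n : ℕ) (w : EuclideanSpace ℝ (Fin N)) (hw : w = (θ * (4 : ℝ)⁻¹ ^ n) • e)
    (δ ε : ℝ) (hδ : δ ∈ Set.Ioo 0 ε₁) (hε : ε ≤ 2 * ε₁ - δ)
    (f : EuclideanSpace ℝ (Fin m) → EuclideanSpace ℝ (Fin N)) (hf : Differentiable ℝ f)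
    (hf0 : ‖f 0‖ ≤ ε) (hfw : ‖f (A (v + w)) - (v + w)‖ ≤ ε) :
    ∀ K : ℝ, 0 ≤ K →
      (∀ c ∈ segment ℝ (0 : EuclideanSpace ℝ (Fin m)) (A (v + w)), ‖fderiv ℝ f c‖ ≤ K) →
      2 * δ * 4 ^ n < K :=
  stmt_14_general m N A hA ε₁ v hv hvnorm e he henorm θ hθ n w hw δ ε hε f hf hf0 hfw
end
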